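/- arXiv:2406.08118 — 2 statements merged into one kernel-verified Lean document; each statement's English description precedes it below -/
import Mathlib

section
/- Let (M,g) be a complete Riemannian manifold and f : M → ℝ a smooth nonnegative Morse function satisfying both ‖df‖_g ≥ c₁·f and ‖df‖_g ≥ c₂·f^{1/2} for constants c₁, c₂ > 0, and attaining its minimum 0 at a unique point x_min. Then there exist constants C₁, C₂, ε > 0 such that f(x) ≥ C₁·exp(ε·d(x_min, x)) - C₂ for all x ∈ M; equivalently, d(x_min, x) ≤ c₁' + c₂'·ln(1 + f(x)) for suitable constants c₁', c₂' > 0. -/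
open Filter Topology

theorem descent_to_zero {M : Type*} [MetricSpace M] [CompleteSpace M]
    (u : M → ℝ) (hu : Continuous u) (hu0 : ∀ z, 0 ≤ u z) (k : ℝ) (hk : 0 < k)
    (H : ∀ y, 0 < u y → ∃ z, z ≠ y ∧ u z + k * dist y z ≤ u y) (x : M) :
    ∃ y, u y = 0 ∧ k * dist x y ≤ u x := by
  classical
  set T : M → Set M := fun a => {z | u z + k * dist a z ≤ u a} with hT
  have hself : ∀ a, a ∈ T a := by
    intro a; simp [hT]
  have htrans : ∀ a b c, b ∈ T a → c ∈ T b → c ∈ T a := by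
    intro a b c hb hc
    simp only [hT, Set.mem_setOf_eq] at *
    have := dist_triangle a b c
    nlinarith [dist_nonneg (x := a) (y := b)]
  have hclosed : ∀ a, IsClosed (T a) := by
    intro a
    exact isClosed_le (by fun_prop) continuous_const
  have hne : ∀ a, (u '' T a).Nonempty := fun a => ⟨u a, a, hself a, rfl⟩
  have hbdd : ∀ a, BddBelow (u '' T a) := by
    intro a; exact ⟨0, by rintro r ⟨z, _, rfl⟩; exact hu0 z⟩
  have key : ∀ (a : M) (n : ℕ), ∃ b, b ∈ T a ∧ u b ≤ sInf (u '' T a) + (1/2) ^ n := by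
    intro a n
    have hlt : sInf (u '' T a) < sInf (u '' T a) + (1/2) ^ n :=
      lt_add_of_pos_right _ (by positivity)
    obtain ⟨r, ⟨b, hb, rfl⟩, hr⟩ := exists_lt_of_csInf_lt (hne a) hlt
    exact ⟨b, hb, hr.le⟩
  set X : ℕ → M := fun n => Nat.rec x (fun n a => (key a n).choose) n with hX
  have hX0 : X 0 = x := rfl
  have hXs : ∀ n, X (n+1) ∈ T (X n) ∧ u (X (n+1)) ≤ sInf (u '' T (X n)) + (1/2) ^ n :=
    fun n => (key (X n) n).choose_spec
  have hsub : ∀ n, T (X (n+1)) ⊆ T (X n) :=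
    fun n z hz => htrans _ _ _ (hXs n).1 hz
  -- any point of T (X (n+1)) is within (1/2)^n / k of X (n+1)
  have hdiam : ∀ n, ∀ z ∈ T (X (n+1)), k * dist (X (n+1)) z ≤ (1/2) ^ n := by
    intro n z hz
    have h1 : u z + k * dist (X (n+1)) z ≤ u (X (n+1)) := hz
    have h2 : sInf (u '' T (X n)) ≤ sInf (u '' T (X (n+1)))  :=
      csInf_le_csInf (hbdd _) (hne _) (Set.image_mono (hsub n))
    have h3 : sInf (u '' T (X (n+1))) ≤ u z := csInf_le (hbdd _) ⟨z, hz, rfl⟩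
    have := (hXs n).2
    linarith
  have hmemchain : ∀ n m, n ≤ m → X m ∈ T (X n) := by
    intro n m hnm
    induction m with
    | zero => obtain rfl := Nat.le_zero.mp hnm; exact hself _
    | succ m ih =>
      rcases Nat.lt_or_ge n (m+1) with h | h
      · exact htrans _ _ _ (ih (Nat.lt_succ_iff.mp h)) (hXs m).1
      · have : n = m + 1 := le_antisymm hnm h
        subst this; exact hself _
  have hcauchy : CauchySeq X := by
    apply cauchySeq_of_le_geometric_two (C := 2 * max (u x / k) (2 / k))
    intro n
    rcases n with _ | m
    · have h1 : u (X 1) + k * dist (X 0) (X 1) ≤ u (X 0) := (hXs 0).1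
      have := hu0 (X 1)
      have hd : dist (X 0) (X 1) ≤ u x / k := by
        rw [hX0] at h1 ⊢
        rw [le_div_iff₀ hk]; linarith [h1]
      calc dist (X 0) (X 1) ≤ u x / k := hd
        _ ≤ 2 * max (u x / k) (2 / k) / 2 / 2 ^ 0 := by
            norm_num
    · have h := hdiam m _ (hXs (m+1)).1
      have hd : dist (X (m+1)) (X (m+2)) ≤ (1/2)^m / k := by
        rw [le_div_iff₀ hk]; linarith [h]
      have h2 : (1/2 : ℝ)^m / k ≤ 2 * max (u x / k) (2 / k) / 2 / 2 ^ (m+1) := by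
        have hmax : 2 / k ≤ max (u x / k) (2 / k) := le_max_right _ _
        rw [div_le_div_iff₀ hk (by positivity)]
        have : (1/2:ℝ)^m * 2^(m+1) = 2 := by
          rw [pow_succ]; ring_nf; rw [← mul_pow]; norm_num
        rw [div_le_iff₀ hk] at hmax
        nlinarith
      exact hd.trans h2
  obtain ⟨y, hy⟩ := cauchySeq_tendsto_of_complete hcauchy
  have hyT : ∀ n, y ∈ T (X n) := by
    intro n
    exact (hclosed (X n)).mem_of_tendsto hy
      (eventually_atTop.2 ⟨n, fun m hm => hmemchain n m hm⟩)
  have hy0 : u y = 0 := by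
    by_contra h
    have hypos : 0 < u y := lt_of_le_of_ne (hu0 y) (Ne.symm h)
    obtain ⟨z, hzy, hz⟩ := H y hypos
    have hzT : ∀ n, z ∈ T (X (n+1)) := fun n => htrans _ _ _ (hyT (n+1)) hz
    have hdz : 0 < dist y z := dist_pos.mpr (Ne.symm hzy)
    obtain ⟨n, hn⟩ := exists_pow_lt_of_lt_one (by positivity : (0:ℝ) < k * dist y z / 2)
      (by norm_num : (1/2:ℝ) < 1)
    have h1 := hdiam n _ (hzT n)
    have h2 := hdiam n _ (hyT (n+1))
    have htri := dist_triangle y (X (n+1)) z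
    rw [dist_comm y (X (n+1))] at htri
    nlinarith
  refine ⟨y, hy0, ?_⟩
  have := hyT 0
  rw [hX0] at this
  have h1 : u y + k * dist x y ≤ u x := this
  linarith [hu0 y, h1, hy0.ge]


theorem slope_descent_step {M : Type*} [NormedAddCommGroup M] [NormedSpace ℝ M]
    (g : M → ℝ) (y : M) (G : M →L[ℝ] ℝ) (hg : HasFDerivAt g G y)
    (k : ℝ) (hk0 : 0 ≤ k) (hk : k < ‖G‖) (ε : ℝ) (hε : 0 < ε) :
    ∃ z, z ≠ y ∧ dist y z < ε ∧ g z + k * dist y z ≤ g y := by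
  -- find v with k * ‖v‖ < ‖G v‖
  have hv : ∃ v : M, k * ‖v‖ < ‖G v‖ := by
    by_contra h
    push_neg at h
    have : ‖G‖ ≤ k := G.opNorm_le_bound hk0 (fun v => by
      have := h v; linarith [this])
    linarith
  obtain ⟨v, hv⟩ := hv
  have hvne : v ≠ 0 := by
    rintro rfl
    simp at hv
  -- choose w with G w < -k * ‖w‖
  have habs : ‖G v‖ = |G v| := rfl
  set w : M := if G v ≤ 0 then v else -v with hw
  have hwne : w ≠ 0 := by
    rw [hw]; split_ifs <;> simp [hvne]
  have hGw : G w < -(k * ‖w‖) := by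
    rw [hw]; split_ifs with h
    · rw [habs, abs_of_nonpos h] at hv; linarith
    · push_neg at h
      rw [habs, abs_of_pos h] at hv
      simp only [map_neg, norm_neg]
      linarith
  -- the curve t ↦ y + t • w
  have hcurve : ∀ t : ℝ, HasDerivAt (fun t : ℝ => y + t • w) w t := by
    intro t
    simpa using ((hasDerivAt_id t).smul_const w).const_add y
  have hg' : HasFDerivAt g G (y + (0:ℝ) • w) := by simpa using hg
  have hφ : HasDerivAt (fun t : ℝ => g (y + t • w)) (G w) 0 :=
    hg'.comp_hasDerivAt 0 (hcurve 0)
  -- slope tends to G w < -k‖w‖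
  have hslope := hasDerivAt_iff_tendsto_slope.mp hφ
  have hmono : 𝓝[>] (0:ℝ) ≤ 𝓝[≠] (0:ℝ) :=
    nhdsWithin_mono _ (fun t (ht : t ∈ Set.Ioi (0:ℝ)) => ne_of_gt ht)
  have hslope' : Tendsto (slope (fun t : ℝ => g (y + t • w)) 0) (𝓝[>] 0) (𝓝 (G w)) :=
    hslope.mono_left hmono
  have hev1 : ∀ᶠ t in 𝓝[>] (0:ℝ),
      slope (fun t : ℝ => g (y + t • w)) 0 t < -(k * ‖w‖) :=
    hslope'.eventually_lt_const hGw
  have hev2 : ∀ᶠ t in 𝓝[>] (0:ℝ), t * ‖w‖ < ε := by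
    have : Tendsto (fun t : ℝ => t * ‖w‖) (𝓝[>] 0) (𝓝 (0 * ‖w‖)) :=
      (tendsto_id.mul_const ‖w‖).mono_left nhdsWithin_le_nhds
    rw [zero_mul] at this
    exact this.eventually_lt_const hε
  obtain ⟨t, hts, htε, htpos⟩ := (hev1.and (hev2.and self_mem_nhdsWithin)).exists
  have htpos : 0 < t := htpos
  refine ⟨y + t • w, ?_, ?_, ?_⟩
  · intro h
    have : t • w = 0 := by
      have := congrArg (fun z => z - y) h
      simpa [add_sub_cancel_left] using this
    rcases smul_eq_zero.mp this with h' | h'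
    · exact htpos.ne' h'
    · exact hwne h'
  · have : dist y (y + t • w) = t * ‖w‖ := by
      rw [dist_eq_norm]
      simp [norm_smul, abs_of_pos htpos]
    rw [this]; exact htε
  · have hd : dist y (y + t • w) = t * ‖w‖ := by
      rw [dist_eq_norm]
      simp [norm_smul, abs_of_pos htpos]
    have hs : slope (fun t : ℝ => g (y + t • w)) 0 t
        = (g (y + t • w) - g y) / t := by
      simp [slope_def_field, div_eq_inv_mul]
    rw [hs] at hts
    rw [div_lt_iff₀ htpos] at hts
    rw [hd]
    nlinarith




/-- **Exponential growth lemma.** On a complete Riemannian manifold (formalized for a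
complete real inner product space), let `f` be a smooth nonnegative Morse function
satisfying `‖df‖ ≥ c₁·f` and `‖df‖ ≥ c₂·√f` for constants `c₁, c₂ > 0`, attaining its
minimum `0` at a unique point `x_min`. Then there are `C₁, C₂, ε > 0` with
`f x ≥ C₁·exp(ε·d(x_min, x)) - C₂` for all `x`; equivalently there are
`c₁', c₂' > 0` with `d(x_min, x) ≤ c₁' + c₂'·ln(1 + f x)`. -/
theorem exponential_growth_of_f
    {M : Type*} [NormedAddCommGroup M] [InnerProductSpace ℝ M] [CompleteSpace M]
    (f : M → ℝ) (hf : ContDiff ℝ (⊤ : ℕ∞) f) (hpos : ∀ x, 0 ≤ f x)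
    (hMorse : ∀ x : M, fderiv ℝ f x = 0 →
      Function.Bijective (fderiv ℝ (fun y => gradient f y) x))
    (c₁ c₂ : ℝ) (hc₁ : 0 < c₁) (hc₂ : 0 < c₂)
    (hgrad₁ : ∀ x : M, c₁ * f x ≤ ‖fderiv ℝ f x‖)
    (hgrad₂ : ∀ x : M, c₂ * Real.sqrt (f x) ≤ ‖fderiv ℝ f x‖)
    (x_min : M) (hmin : f x_min = 0) (huniq : ∀ y : M, f y = 0 → y = x_min) :
    (∃ C₁ C₂ ε : ℝ, 0 < C₁ ∧ 0 < C₂ ∧ 0 < ε ∧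
      ∀ x : M, C₁ * Real.exp (ε * dist x_min x) - C₂ ≤ f x) ∧
    (∃ c₁' c₂' : ℝ, 0 < c₁' ∧ 0 < c₂' ∧
      ∀ x : M, dist x_min x ≤ c₁' + c₂' * Real.log (1 + f x)) := by
  have hdf : Differentiable ℝ f := hf.differentiable (by simp)
  -- Step A : quadratic growth near the minimum
  have stepA : ∀ x : M, (c₂ / 4) * dist x x_min ≤ Real.sqrt (f x) := by
    intro x
    have H1 : ∀ y : M, 0 < Real.sqrt (f y) →
        ∃ z, z ≠ y ∧ Real.sqrt (f z) + (c₂ / 4) * dist y z ≤ Real.sqrt (f y) := by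
      intro y hy
      have hfy : 0 < f y := Real.sqrt_pos.mp hy
      have hF : HasFDerivAt f (fderiv ℝ f y) y := (hdf y).hasFDerivAt
      have hG : HasFDerivAt (fun z => Real.sqrt (f z))
          ((1 / (2 * Real.sqrt (f y))) • fderiv ℝ f y) y :=
        (Real.hasDerivAt_sqrt (ne_of_gt hfy)).comp_hasFDerivAt y hF
      have hs : 0 < Real.sqrt (f y) := Real.sqrt_pos.mpr hfy
      have hnorm : c₂ / 2 ≤ ‖(1 / (2 * Real.sqrt (f y))) • fderiv ℝ f y‖ := by
        rw [norm_smul, Real.norm_eq_abs, abs_of_pos (by positivity)]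
        have h2 := hgrad₂ y
        rw [div_le_iff₀ (by positivity : (0:ℝ) < 2)]
        calc c₂ = (1 / (2 * Real.sqrt (f y))) * (c₂ * Real.sqrt (f y)) * 2 := by
              field_simp
          _ ≤ (1 / (2 * Real.sqrt (f y))) * ‖fderiv ℝ f y‖ * 2 := by
              have : (0:ℝ) < 1 / (2 * Real.sqrt (f y)) := by positivity
              nlinarith
        
      obtain ⟨z, hzy, _, hz⟩ := slope_descent_step _ y _ hG (c₂ / 4) (by positivity)
        (lt_of_lt_of_le (by linarith) hnorm) 1 one_pos
      exact ⟨z, hzy, hz⟩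
    obtain ⟨y, hy0, hyd⟩ := descent_to_zero (fun z => Real.sqrt (f z))
      (Real.continuous_sqrt.comp hf.continuous) (fun z => Real.sqrt_nonneg _)
      (c₂ / 4) (by positivity) H1 x
    have hfy : f y = 0 := (Real.sqrt_eq_zero (hpos y)).mp hy0
    rw [huniq y hfy] at hyd
    exact hyd
  -- Step B : logarithmic distance bound
  have hu₂cont : Continuous (fun z => Real.log (max (f z) 1)) := by
    apply Continuous.log (hf.continuous.max continuous_const)
    intro z
    have : (1:ℝ) ≤ max (f z) 1 := le_max_right _ _
    linarith
  have stepB : ∀ x : M, ∃ y : M, Real.log (max (f y) 1) = 0 ∧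
      (c₁ / 2) * dist x y ≤ Real.log (max (f x) 1) := by
    intro x
    apply descent_to_zero _ hu₂cont
      (fun z => Real.log_nonneg (le_max_right _ _)) (c₁ / 2) (by positivity)
    intro y hy
    have hfy : 1 < f y := by
      by_contra h
      push_neg at h
      rw [max_eq_right h, Real.log_one] at hy
      exact lt_irrefl 0 hy
    have hfy0 : 0 < f y := by linarith
    have hF : HasFDerivAt f (fderiv ℝ f y) y := (hdf y).hasFDerivAt
    have hG : HasFDerivAt (fun z => Real.log (f z)) ((f y)⁻¹ • fderiv ℝ f y) y :=
      (Real.hasDerivAt_log (ne_of_gt hfy0)).comp_hasFDerivAt y hF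
    have hnorm : c₁ ≤ ‖(f y)⁻¹ • fderiv ℝ f y‖ := by
      rw [norm_smul, Real.norm_eq_abs, abs_of_pos (by positivity)]
      have h1 := hgrad₁ y
      have hinv : 0 < (f y)⁻¹ := by positivity
      calc c₁ = (f y)⁻¹ * (c₁ * f y) := by field_simp
        _ ≤ (f y)⁻¹ * ‖fderiv ℝ f y‖ := by nlinarith
    have hopen : IsOpen {z : M | 1 < f z} := isOpen_lt continuous_const hf.continuous
    obtain ⟨ε, hε, hball⟩ := Metric.isOpen_iff.mp hopen y hfy
    obtain ⟨z, hzy, hzd, hz⟩ := slope_descent_step _ y _ hG (c₁ / 2) (by positivity)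
      (lt_of_lt_of_le (by linarith) hnorm) ε hε
    have hfz : 1 < f z := hball (by rwa [Metric.mem_ball, dist_comm])
    refine ⟨z, hzy, ?_⟩
    rw [max_eq_left hfz.le, max_eq_left hfy.le]
    exact hz
  -- main distance bound
  have main : ∀ x : M, dist x_min x ≤ 4 / c₂ + (2 / c₁) * Real.log (1 + f x) := by
    intro x
    obtain ⟨y, hy0, hyd⟩ := stepB x
    have hfy1 : f y ≤ 1 := by
      by_contra h
      push_neg at h
      rw [max_eq_left h.le] at hy0
      exact (Real.log_pos h).ne' hy0
    have hyB : dist y x_min ≤ 4 / c₂ := by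
      have h := stepA y
      have hsq : Real.sqrt (f y) ≤ 1 := Real.sqrt_le_one.mpr hfy1
      rw [le_div_iff₀ hc₂]
      nlinarith [dist_nonneg (x := y) (y := x_min)]
    have hmaxle : max (f x) 1 ≤ 1 + f x := by
      have := hpos x
      apply max_le <;> linarith
    have hlog : Real.log (max (f x) 1) ≤ Real.log (1 + f x) :=
      Real.log_le_log (by positivity) hmaxle
    have hd : (c₁ / 2) * dist x y ≤ Real.log (1 + f x) := hyd.trans hlog
    have hd2 : dist x y ≤ (2 / c₁) * Real.log (1 + f x) := by
      have heq : (2 / c₁) * ((c₁ / 2) * dist x y) = dist x y := by field_simp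
      have := mul_le_mul_of_nonneg_left hd (le_of_lt (by positivity : (0:ℝ) < 2 / c₁))
      linarith [heq ▸ this]
    rw [dist_comm x_min x]
    calc dist x x_min ≤ dist x y + dist y x_min := dist_triangle x y x_min
      _ ≤ (2 / c₁) * Real.log (1 + f x) + 4 / c₂ := by linarith
      _ = 4 / c₂ + (2 / c₁) * Real.log (1 + f x) := by ring
  constructor
  · refine ⟨Real.exp (-(2 * c₁ / c₂)), 1, c₁ / 2, Real.exp_pos _, one_pos, by positivity, ?_⟩
    intro x
    have hm := main x
    have h1 : (c₁ / 2) * dist x_min x ≤ 2 * c₁ / c₂ + Real.log (1 + f x) := by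
      have hh := mul_le_mul_of_nonneg_left hm (le_of_lt (by positivity : (0:ℝ) < c₁ / 2))
      have : (c₁ / 2) * (4 / c₂ + (2 / c₁) * Real.log (1 + f x))
          = 2 * c₁ / c₂ + Real.log (1 + f x) := by field_simp; ring
      linarith [this ▸ hh]
    have h2 : Real.exp ((c₁ / 2) * dist x_min x) ≤ Real.exp (2 * c₁ / c₂) * (1 + f x) := by
      calc Real.exp ((c₁ / 2) * dist x_min x)
          ≤ Real.exp (2 * c₁ / c₂ + Real.log (1 + f x)) := Real.exp_le_exp.mpr h1
        _ = Real.exp (2 * c₁ / c₂) * (1 + f x) := by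
            rw [Real.exp_add, Real.exp_log (by linarith [hpos x])]
    have h3 := mul_le_mul_of_nonneg_left h2 (Real.exp_pos (-(2 * c₁ / c₂))).le
    have h4 : Real.exp (-(2 * c₁ / c₂)) * (Real.exp (2 * c₁ / c₂) * (1 + f x)) = 1 + f x := by
      rw [← mul_assoc, ← Real.exp_add, neg_add_cancel, Real.exp_zero, one_mul]
    linarith [h3, h4]
  · exact ⟨4 / c₂, 2 / c₁, by positivity, by positivity, fun x => main x⟩
end

section
/- Let (M,g) be a complete Riemannian 2-manifold with a conformal factor λ > 0, i.e. g = λ·(dx² + dy²) in local isothermal coordinates, where λ = 2·H₋₂⁻¹·H₋₁ for positive smooth functions H₋₂, H₋₁ satisfying Δ ln H₋₂ = H₋₂H₁⁻¹|γ|² - H₋₂⁻¹H₋₁ and Δ ln H₋₁ = H₋₁H₋₂⁻¹ + H₋₁H₂⁻¹|γ|² - H₋₁⁻¹|β|², with H₁ = H₋₁⁻¹, H₂ = H₋₂⁻¹, |γ|² = |γ^∨|², and Δ the coordinate Laplacian. Then the Gaussian curvature K_g = -Δ ln λ / λ satisfies K_g ≥ -2 everywhere. -/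
/-- The coordinate Laplacian `Δ = ∂²/∂x² + ∂²/∂y²` in isothermal coordinates. -/
noncomputable def coordLaplacian (f : ℝ × ℝ → ℝ) (p : ℝ × ℝ) : ℝ :=
  deriv (fun x : ℝ => deriv (fun x' : ℝ => f (x', p.2)) x) p.1
    + deriv (fun y : ℝ => deriv (fun y' : ℝ => f (p.1, y')) y) p.2

/-- Second derivative of `c - F + G` for smooth one-variable functions. -/
lemma second_deriv_comb (F G : ℝ → ℝ) (hF : ContDiff ℝ (⊤ : ℕ∞) F) (hG : ContDiff ℝ (⊤ : ℕ∞) G)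
    (c : ℝ) (x : ℝ) :
    deriv (fun t => deriv (fun s => c - F s + G s) t) x
      = -deriv (deriv F) x + deriv (deriv G) x := by
  have hFd : Differentiable ℝ F := (contDiff_infty_iff_deriv.mp hF).1
  have hGd : Differentiable ℝ G := (contDiff_infty_iff_deriv.mp hG).1
  have hF' : ContDiff ℝ (⊤ : ℕ∞) (deriv F) := (contDiff_infty_iff_deriv.mp hF).2
  have hG' : ContDiff ℝ (⊤ : ℕ∞) (deriv G) := (contDiff_infty_iff_deriv.mp hG).2
  have h1 : (fun s => deriv (fun s' => c - F s' + G s') s)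
      = fun s => -deriv F s + deriv G s := by
    funext s
    rw [deriv_fun_add (f := fun s' => c - F s') ((differentiable_const c).sub hFd).differentiableAt
      (hGd.differentiableAt), deriv_const_sub]
  rw [h1, deriv_fun_add (f := fun s => -deriv F s) ((contDiff_infty_iff_deriv.mp hF').1.neg.differentiableAt)
    ((contDiff_infty_iff_deriv.mp hG').1.differentiableAt), deriv.fun_neg]

/-- Linearity of the coordinate Laplacian for `c - f + g` with smooth `f, g`. -/
lemma coordLaplacian_comb (f g : ℝ × ℝ → ℝ) (hf : ContDiff ℝ (⊤ : ℕ∞) f) (hg : ContDiff ℝ (⊤ : ℕ∞) g)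
    (c : ℝ) (p : ℝ × ℝ) :
    coordLaplacian (fun q => c - f q + g q) p
      = -coordLaplacian f p + coordLaplacian g p := by
  have hx : ContDiff ℝ (⊤ : ℕ∞) (fun x : ℝ => (x, p.2)) := contDiff_id.prodMk contDiff_const
  have hy : ContDiff ℝ (⊤ : ℕ∞) (fun y : ℝ => (p.1, y)) := contDiff_const.prodMk contDiff_id
  have hfx : ContDiff ℝ (⊤ : ℕ∞) (fun x : ℝ => f (x, p.2)) := hf.comp hx
  have hgx : ContDiff ℝ (⊤ : ℕ∞) (fun x : ℝ => g (x, p.2)) := hg.comp hx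
  have hfy : ContDiff ℝ (⊤ : ℕ∞) (fun y : ℝ => f (p.1, y)) := hf.comp hy
  have hgy : ContDiff ℝ (⊤ : ℕ∞) (fun y : ℝ => g (p.1, y)) := hg.comp hy
  unfold coordLaplacian
  simp only
  rw [second_deriv_comb _ _ hfx hgx c p.1, second_deriv_comb _ _ hfy hgy c p.2]
  ring

/-- **Curvature bound for the metric `g_h`.** In local isothermal coordinates let
`λ = 2·Hm2⁻¹·Hm1` with `Hm2, Hm1 > 0` smooth, satisfying the Hitchin equations
`Δ ln Hm2 = Hm2·H₁⁻¹·|γ|² - Hm2⁻¹·Hm1` and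
`Δ ln Hm1 = Hm1·Hm2⁻¹ + Hm1·H₂⁻¹·|γ|² - Hm1⁻¹·|β|²`, where `H₁ = Hm1⁻¹`,
`H₂ = Hm2⁻¹`, `|γ|² = |γ^∨|² =: G ≥ 0` and `|β|² =: B ≥ 0`. Then the Gaussian
curvature `K_g = -Δ ln λ / λ` satisfies `K_g ≥ -2` everywhere. -/
theorem curvature_bound_of_hitchin_equations
    (Hm2 Hm1 B G : ℝ × ℝ → ℝ)
    (hH₂ : ContDiff ℝ (⊤ : ℕ∞) Hm2) (hH₁ : ContDiff ℝ (⊤ : ℕ∞) Hm1)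
    (hH₂pos : ∀ p, 0 < Hm2 p) (hH₁pos : ∀ p, 0 < Hm1 p)
    (hB : ∀ p, 0 ≤ B p) (hG : ∀ p, 0 ≤ G p)
    (heq₂ : ∀ p, coordLaplacian (fun q => Real.log (Hm2 q)) p
      = Hm2 p * Hm1 p * G p - (Hm2 p)⁻¹ * Hm1 p)
    (heq₁ : ∀ p, coordLaplacian (fun q => Real.log (Hm1 q)) p
      = Hm1 p * (Hm2 p)⁻¹ + Hm1 p * Hm2 p * G p - (Hm1 p)⁻¹ * B p) :
    ∀ p, -2 ≤ -(coordLaplacian (fun q => Real.log (2 * (Hm2 q)⁻¹ * Hm1 q)) p)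
              / (2 * (Hm2 p)⁻¹ * Hm1 p) := by
  intro p
  have hlog2 : ContDiff ℝ (⊤ : ℕ∞) (fun q => Real.log (Hm2 q)) :=
    hH₂.log (fun q => (hH₂pos q).ne')
  have hlog1 : ContDiff ℝ (⊤ : ℕ∞) (fun q => Real.log (Hm1 q)) :=
    hH₁.log (fun q => (hH₁pos q).ne')
  have hfe : (fun q => Real.log (2 * (Hm2 q)⁻¹ * Hm1 q))
      = fun q => Real.log 2 - Real.log (Hm2 q) + Real.log (Hm1 q) := by
    funext q
    have h2 := hH₂pos q
    have h1 := hH₁pos q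
    rw [Real.log_mul (by positivity) (hH₁pos q).ne',
        Real.log_mul (by norm_num) (inv_ne_zero (hH₂pos q).ne'),
        Real.log_inv]
    ring
  have hlap : coordLaplacian (fun q => Real.log (2 * (Hm2 q)⁻¹ * Hm1 q)) p
      = 2 * (Hm2 p)⁻¹ * Hm1 p - (Hm1 p)⁻¹ * B p := by
    rw [hfe, coordLaplacian_comb _ _ (hlog2.of_le (by simp)) (hlog1.of_le (by simp)), heq₂ p, heq₁ p]
    ring
  rw [hlap]
  have h2 := hH₂pos p
  have h1 := hH₁pos p
  have ha : 0 < 2 * (Hm2 p)⁻¹ * Hm1 p := by positivity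
  rw [le_div_iff₀ ha]
  have hb : 0 ≤ (Hm1 p)⁻¹ * B p := mul_nonneg (inv_nonneg.mpr h1.le) (hB p)
  nlinarith
end
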